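/- arXiv:1704.04252 — 7 statements merged into one kernel-verified Lean document; each statement's English description precedes it below -/
import Mathlib

section
/- Let A = [A_{i,j}]_{i,j∈ℕ} be the transition matrix of an irreducible Markov chain with countable state space, i.e. an irreducible stochastic matrix, acting as a bounded linear operator on the space c of convergent complex sequences. Then A is not supercyclic on c: for every y ∈ c, the projective orbit {λ A^n y : λ ∈ ℂ, n ∈ ℕ} is not dense in c. -/
open Filter

/-- Action of an infinite matrix `A` on a complex sequence: `(A x)_i = ∑_j A_{i,j} x_j`. -/
noncomputable def matAct (A : ℕ → ℕ → ℝ) (x : ℕ → ℂ) : ℕ → ℂ :=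
  fun i => ∑' j, (A i j : ℂ) * x j

/-- Entries of the `n`-th matrix power of `A`. -/
noncomputable def matPow (A : ℕ → ℕ → ℝ) : ℕ → ℕ → ℕ → ℝ
  | 0, i, j => if i = j then 1 else 0
  | n + 1, i, j => ∑' k, A i k * matPow A n k j

/-!
A stochastic matrix fixes the constants and does not increase distances to them, so once
some multiple `a • Aⁿ⁰ y` lies within `1/8` of the constant `1`, so does `a • Aⁿ y` for every
`n ≥ n₀`; such vectors are projectively far from `(1, -1, 0, 0, …)`. The finitely many earlier
iterates cannot approximate `(1, *, R, 0, …)` projectively once `R` exceeds all the ratios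
`|(Aⁿ y)₂| / |(Aⁿ y)₀|`, `n < n₀`. Hence no projective orbit approximates the target
`(1, -1, R, 0, 0, …)`.
-/

lemma matAct_const_mul (A : ℕ → ℕ → ℝ) (a : ℂ) (x : ℕ → ℂ) :
    matAct A (fun j => a * x j) = fun i => a * matAct A x i := by
  ext i
  simp only [matAct, ← tsum_mul_left, mul_left_comm a]

section Stochastic

variable {A : ℕ → ℕ → ℝ} (hpos : ∀ i j, 0 ≤ A i j) (hrow : ∀ i, HasSum (fun j => A i j) 1)
include hpos hrow

lemma norm_matAct_sub_const_le {x : ℕ → ℂ} {c : ℂ} {s : ℝ} (hx : ∀ j, ‖x j - c‖ ≤ s) (i : ℕ) :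
    ‖matAct A x i - c‖ ≤ s := by
  have hbound : ∀ j, ‖(A i j : ℂ) * (x j - c)‖ ≤ A i j * s := fun j => by
    rw [norm_mul, Complex.norm_of_nonneg (hpos i j)]
    exact mul_le_mul_of_nonneg_left (hx j) (hpos i j)
  have hrow_s : HasSum (fun j => A i j * s) s := by simpa using (hrow i).mul_right s
  have hrow_c : HasSum (fun j => (A i j : ℂ) * c) c := by
    simpa using ((hrow i).mapL Complex.ofRealCLM).mul_right c
  have hdev : Summable (fun j => (A i j : ℂ) * (x j - c)) :=
    .of_norm_bounded hrow_s.summable hbound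
  have hsplit : matAct A x i = ∑' j, (A i j : ℂ) * (x j - c) + c := by
    rw [← (hdev.hasSum.add hrow_c).tsum_eq, matAct]
    exact tsum_congr fun j => by ring
  rw [hsplit, add_sub_cancel_right]
  exact tsum_of_norm_bounded hrow_s hbound

lemma norm_mul_iterate_matAct_sub_const_le {x : ℕ → ℂ} {a c : ℂ} {s : ℝ}
    (hx : ∀ j, ‖a * x j - c‖ ≤ s) (t i : ℕ) : ‖a * (matAct A)^[t] x i - c‖ ≤ s := by
  induction t generalizing i with
  | zero => exact hx i
  | succ t ih =>
    rw [Function.iterate_succ_apply', ← congrFun (matAct_const_mul A a _) i]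
    exact norm_matAct_sub_const_le hpos hrow ih i

end Stochastic

/-- As `a • (w, u)` lies within `1/8` of `(1, 1)`, `‖w - u‖ ≤ 1 / (4‖a‖)`, so sending `(w, u)` near
`(1, -1)` needs `‖b‖ ≥ 4 / ‖a‖`; but `‖b u‖ < 3/2` and `‖a u‖ ≥ 7/8` give `‖b‖ < 12 / (7‖a‖)`. -/
lemma half_le_norm_mul_add_one {a b u w : ℂ} (hau : ‖a * u - 1‖ ≤ 1 / 8)
    (haw : ‖a * w - 1‖ ≤ 1 / 8) (hbw : ‖b * w - 1‖ < 1 / 2) : 1 / 2 ≤ ‖b * u + 1‖ := by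
  by_contra! hbu
  have had : ‖a‖ * ‖w - u‖ ≤ 1 / 4 := by
    rw [← norm_mul, show a * (w - u) = (a * w - 1) - (a * u - 1) by ring]
    linarith [norm_sub_le (a * w - 1) (a * u - 1)]
  have hau' : 7 / 8 ≤ ‖a‖ * ‖u‖ := by
    rw [← norm_mul]
    linarith [norm_sub_norm_le (1 : ℂ) (a * u), norm_sub_rev (1 : ℂ) (a * u), norm_one (α := ℂ)]
  have hbu' : ‖b‖ * ‖u‖ ≤ 3 / 2 := by
    have := norm_sub_le (b * u + 1) 1
    rw [add_sub_cancel_right, norm_one, norm_mul] at this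
    linarith
  have hbd : 1 ≤ ‖b‖ * ‖w - u‖ := by
    rw [← norm_mul, show b * (w - u) = 2 + ((b * w - 1) - (b * u + 1)) by ring]
    have := norm_sub_norm_le (2 : ℂ) (-((b * w - 1) - (b * u + 1)))
    rw [sub_neg_eq_add, norm_neg, Complex.norm_two] at this
    linarith [norm_sub_le (b * w - 1) (b * u + 1)]
  have : (‖a‖ * ‖w - u‖) * (‖b‖ * ‖u‖) = (‖b‖ * ‖w - u‖) * (‖a‖ * ‖u‖) := by ring
  nlinarith [mul_le_mul had hbu' (by positivity) (by norm_num),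
    mul_le_mul hbd hau' (by norm_num) (by positivity)]

lemma half_le_norm_mul_sub_ofReal {b u w : ℂ} {r : ℝ} (hbu : ‖b * u - 1‖ < 1 / 2)
    (hr : 1 + 2 * (‖w‖ / ‖u‖) ≤ r) : 1 / 2 ≤ ‖b * w - r‖ := by
  by_contra! hbw
  have hu : ‖u‖ ≠ 0 := by
    rintro hu
    rw [norm_eq_zero.1 hu, mul_zero, zero_sub, norm_neg, norm_one] at hbu
    norm_num at hbu
  have hbu' : ‖b‖ * ‖u‖ < 3 / 2 := by
    have := norm_add_le (b * u - 1) 1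
    rw [sub_add_cancel, norm_one, norm_mul] at this
    linarith
  have hbw' : r - 1 / 2 < ‖b‖ * ‖w‖ := by
    rw [← norm_mul]
    have := norm_sub_norm_le (r : ℂ) (b * w)
    rw [norm_sub_rev, Complex.norm_real, Real.norm_eq_abs] at this
    linarith [le_abs_self r]
  have hratio : ‖b‖ * ‖w‖ = ‖b‖ * ‖u‖ * (‖w‖ / ‖u‖) := by field_simp
  nlinarith [div_nonneg (norm_nonneg w) (norm_nonneg u)]

theorem stmt0_general (A : ℕ → ℕ → ℝ)
    (hpos : ∀ i j, 0 ≤ A i j)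
    (hrow : ∀ i, HasSum (fun j => A i j) 1)
    (y : ℕ → ℂ) :
    ¬ (∀ z : ℕ → ℂ, (∃ l, Tendsto z atTop (nhds l)) → ∀ ε : ℝ, 0 < ε →
        ∃ (lam : ℂ) (n : ℕ), ∀ i, ‖lam * (matAct A)^[n] y i - z i‖ < ε) := by
  intro H
  obtain ⟨a, n₀, hn₀⟩ := H (fun _ => 1) ⟨1, tendsto_const_nhds⟩ (1 / 8) (by norm_num)
  set ratio : ℕ → ℝ := fun m => ‖(matAct A)^[m] y 2‖ / ‖(matAct A)^[m] y 0‖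
  set R : ℝ := 1 + 2 * ∑ m ∈ Finset.range n₀, ratio m
  set z : ℕ → ℂ := fun i => if i = 0 then 1 else if i = 1 then -1 else if i = 2 then R else 0
  have hz : Tendsto z atTop (nhds 0) :=
    tendsto_const_nhds.congr' (eventually_atTop.2 ⟨3, fun i hi => by simp only [z]; split_ifs <;> first | omega | rfl⟩)
  obtain ⟨b, n, hn⟩ := H z ⟨0, hz⟩ (1 / 2) (by norm_num)
  rcases lt_or_ge n n₀ with hlt | hge
  · have hR : 1 + 2 * ratio n ≤ R := by
      simp only [R]
      gcongr
      exact Finset.single_le_sum (fun m _ => by positivity) (Finset.mem_range.2 hlt)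
    exact (half_le_norm_mul_sub_ofReal (by simpa [z] using hn 0) hR).not_gt
      (by simpa [z] using hn 2)
  · obtain ⟨t, rfl⟩ := Nat.exists_eq_add_of_le hge
    have hclose := norm_mul_iterate_matAct_sub_const_le hpos hrow (fun j => (hn₀ j).le) t
    simp only [← Function.iterate_add_apply, add_comm t] at hclose
    exact (half_le_norm_mul_add_one (hclose 1) (hclose 0) (by simpa [z] using hn 0)).not_gt
      (by simpa [z] using hn 1)

/-- A transition operator of an irreducible Markov chain with countable state space
(an irreducible stochastic matrix) is not supercyclic on the space `c` of convergent
complex sequences (with the sup norm): for every `y ∈ c`, the projective orbit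
`{λ A^n y : λ ∈ ℂ, n ∈ ℕ}` is not dense in `c`. -/
theorem stmt0 (A : ℕ → ℕ → ℝ)
    (hpos : ∀ i j, 0 ≤ A i j)
    (hrow : ∀ i, HasSum (fun j => A i j) 1)
    (hirr : ∀ i j, ∃ n, 0 < matPow A n i j)
    (y : ℕ → ℂ) (hy : ∃ l, Tendsto y atTop (nhds l)) :
    ¬ (∀ z : ℕ → ℂ, (∃ l, Tendsto z atTop (nhds l)) → ∀ ε : ℝ, 0 < ε →
        ∃ (lam : ℂ) (n : ℕ), ∀ i, ‖lam * (matAct A)^[n] y i - z i‖ < ε) :=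
  stmt0_general A hpos hrow y
end

section
/- Let A = [A_{i,j}]_{i,j∈ℕ} be an irreducible stochastic matrix which is positive recurrent, i.e. there exists an invariant probability vector u ∈ l^1 (u_i ≥ 0, Σ_i u_i = 1, and Σ_i u_i A_{i,j} = u_j for every j). Then A, acting as a bounded linear operator on c_0, is not supercyclic on c_0. -/
/-!
The invariant probability vector `u` gives a functional `φ x = ∑ᵢ uᵢ xᵢ` on bounded sequences
with `φ ∘ A = φ` and `|φ x| ≤ ‖x‖_∞`, and `A` is a contraction of `ℓ^∞`. So along the projective
orbit of `y`, with `c = φ y`, we have `φ (λ Aⁿ y) = λ c` and `‖λ Aⁿ y‖_∞ ≤ |λ| ‖y‖_∞`.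
Take `z ∈ c₀` with `φ z = 1` and one coordinate equal to `M`. If `λ Aⁿ y` is within `1/2` of `z`,
then `1/2 ≤ |λ c| ≤ 3/2`, forcing `c ≠ 0` and `|λ| ≤ 3 / (2|c|)`, hence
`M - 1/2 < 3 ‖y‖_∞ / (2|c|)`, which fails for `M` large.
-/

open Filter

noncomputable def weightedSum {ι : Type*} (u : ι → ℝ) (x : ι → ℂ) : ℂ :=
  ∑' i, (u i : ℂ) * x i

section WeightedSum

variable {ι : Type*} {u : ι → ℝ} {x z : ι → ℂ} {C D ε : ℝ}

lemma norm_ofReal_mul_le {r : ℝ} {w : ℂ} (hr : 0 ≤ r) (hw : ‖w‖ ≤ C) : ‖(r : ℂ) * w‖ ≤ r * C := by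
  rw [norm_mul, Complex.norm_real, Real.norm_of_nonneg hr]
  exact mul_le_mul_of_nonneg_left hw hr

lemma summable_ofReal_mul (hu : Summable u) (hu_nn : ∀ i, 0 ≤ u i) (hx : ∀ i, ‖x i‖ ≤ C) :
    Summable fun i => (u i : ℂ) * x i :=
  (hu.mul_right C).of_norm_bounded fun i => norm_ofReal_mul_le (hu_nn i) (hx i)

lemma norm_weightedSum_le (hu_nn : ∀ i, 0 ≤ u i) (hu_sum : HasSum u 1) (hx : ∀ i, ‖x i‖ ≤ ε) :
    ‖weightedSum u x‖ ≤ ε := by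
  have hb := fun i => norm_ofReal_mul_le (hu_nn i) (hx i)
  have hsum := hu_sum.summable.mul_right ε
  have hsum_norm := hsum.of_nonneg_of_le (fun _ => norm_nonneg _) hb
  calc ‖weightedSum u x‖ ≤ ∑' i, ‖(u i : ℂ) * x i‖ := norm_tsum_le_tsum_norm hsum_norm
    _ ≤ ∑' i, u i * ε := hsum_norm.tsum_le_tsum hb hsum
    _ = ε := by rw [tsum_mul_right, hu_sum.tsum_eq, one_mul]

lemma weightedSum_const_mul (a : ℂ) : weightedSum u (fun i => a * x i) = a * weightedSum u x := by
  simp only [weightedSum, mul_left_comm _ a, tsum_mul_left]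

lemma norm_weightedSum_sub_le (hu_nn : ∀ i, 0 ≤ u i) (hu_sum : HasSum u 1)
    (hx : ∀ i, ‖x i‖ ≤ C) (hz : ∀ i, ‖z i‖ ≤ D) (hxz : ∀ i, ‖x i - z i‖ ≤ ε) :
    ‖weightedSum u x - weightedSum u z‖ ≤ ε := by
  have hsub : weightedSum u x - weightedSum u z = weightedSum u (x - z) := by
    simp only [weightedSum, Pi.sub_apply, mul_sub]
    exact ((summable_ofReal_mul hu_sum.summable hu_nn hx).tsum_sub
      (summable_ofReal_mul hu_sum.summable hu_nn hz)).symm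
  rw [hsub]
  exact norm_weightedSum_le hu_nn hu_sum hxz

end WeightedSum

lemma exists_pos_of_hasSum_one {ι : Type*} {u : ι → ℝ} (hu_sum : HasSum u 1) : ∃ k, 0 < u k := by
  by_contra! h
  exact absurd (hasSum_le h hu_sum hasSum_zero) (by norm_num)

lemma exists_norm_le_of_tendsto {x : ℕ → ℂ} {a : ℂ} (hx : Tendsto x atTop (nhds a)) :
    ∃ C, ∀ i, ‖x i‖ ≤ C := by
  obtain ⟨C, hC⟩ := isBounded_iff_forall_norm_le.mp (Metric.isBounded_range_of_tendsto x hx)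
  exact ⟨C, fun i => hC _ ⟨i, rfl⟩⟩

lemma exists_tendsto_zero_weightedSum_eq {u : ℕ → ℝ} {k m : ℕ} (hk : u k ≠ 0) (hkm : k ≠ m)
    (a b : ℂ) :
    ∃ z : ℕ → ℂ, Tendsto z atTop (nhds 0) ∧ z m = b ∧ weightedSum u z = a := by
  set d : ℂ := (a - u m * b) / u k
  refine ⟨(Pi.single m b : ℕ → ℂ) + Pi.single k d, ?_, by simp [hkm], ?_⟩
  · refine tendsto_const_nhds.congr' ?_
    filter_upwards [eventually_gt_atTop (max k m)] with i hi
    simp [(lt_of_le_of_lt (le_max_left _ _) hi).ne',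
      (lt_of_le_of_lt (le_max_right _ _) hi).ne']
  · have single (j : ℕ) (w : ℂ) :
        HasSum (fun i => (u i : ℂ) * (Pi.single j w : ℕ → ℂ) i) (u j * w) := by
      simpa using hasSum_single (f := fun i => (u i : ℂ) * (Pi.single j w : ℕ → ℂ) i) j
        fun i hi => by simp [hi]
    have hsum := (single m b).add (single k d)
    simp only [← mul_add] at hsum
    simp only [weightedSum, Pi.add_apply, hsum.tsum_eq]
    rw [mul_div_cancel₀ _ (Complex.ofReal_ne_zero.mpr hk)]
    ring

section StochasticMatrix

variable {A : ℕ → ℕ → ℝ} {x : ℕ → ℂ} {C : ℝ}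

lemma matAct_eq_weightedSum (A : ℕ → ℕ → ℝ) (x : ℕ → ℂ) (i : ℕ) :
    matAct A x i = weightedSum (A i) x := rfl

lemma norm_iterate_matAct_le (hpos : ∀ i j, 0 ≤ A i j) (hrow : ∀ i, HasSum (fun j => A i j) 1)
    (hx : ∀ i, ‖x i‖ ≤ C) (n i : ℕ) : ‖(matAct A)^[n] x i‖ ≤ C := by
  induction n generalizing i with
  | zero => exact hx i
  | succ n ih =>
    rw [Function.iterate_succ_apply', matAct_eq_weightedSum]
    exact norm_weightedSum_le (hpos i) (hrow i) ih

/-- Fubini for `∑ᵢ uᵢ ∑ⱼ Aᵢⱼ xⱼ`, the double series being dominated by `uᵢ Aᵢⱼ C`. -/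
lemma weightedSum_matAct (hpos : ∀ i j, 0 ≤ A i j) (hrow : ∀ i, HasSum (fun j => A i j) 1)
    {u : ℕ → ℝ} (hu_nn : ∀ i, 0 ≤ u i) (hu_sum : HasSum u 1)
    (hu_inv : ∀ j, HasSum (fun i => u i * A i j) (u j)) (hx : ∀ i, ‖x i‖ ≤ C) :
    weightedSum u (matAct A x) = weightedSum u x := by
  set f : ℕ → ℕ → ℂ := fun i j => ((u i * A i j : ℝ) : ℂ) * x j
  have hbound : ∀ p : ℕ × ℕ, ‖Function.uncurry f p‖ ≤ u p.1 * A p.1 p.2 * C := fun p =>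
    norm_ofReal_mul_le (mul_nonneg (hu_nn _) (hpos _ _)) (hx p.2)
  have hdom : Summable fun p : ℕ × ℕ => u p.1 * A p.1 p.2 := by
    refine (summable_prod_of_nonneg fun p => mul_nonneg (hu_nn _) (hpos _ _)).2
      ⟨fun i => (hrow i).summable.mul_left (u i), ?_⟩
    simpa [tsum_mul_left, (hrow _).tsum_eq] using hu_sum.summable
  have hrows : ∀ i, ∑' j, f i j = (u i : ℂ) * matAct A x i := fun i => by
    simp only [f, matAct, Complex.ofReal_mul, mul_assoc, tsum_mul_left]
  have hcols : ∀ j, ∑' i, f i j = (u j : ℂ) * x j := fun j => by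
    rw [tsum_mul_right, (Complex.hasSum_ofReal.mpr (hu_inv j)).tsum_eq]
  calc weightedSum u (matAct A x) = ∑' i, ∑' j, f i j := by simp only [hrows, weightedSum]
    _ = ∑' j, ∑' i, f i j := ((hdom.mul_right C).of_norm_bounded hbound).tsum_comm.symm
    _ = weightedSum u x := by simp only [hcols, weightedSum]

lemma weightedSum_iterate_matAct (hpos : ∀ i j, 0 ≤ A i j)
    (hrow : ∀ i, HasSum (fun j => A i j) 1) {u : ℕ → ℝ} (hu_nn : ∀ i, 0 ≤ u i)
    (hu_sum : HasSum u 1) (hu_inv : ∀ j, HasSum (fun i => u i * A i j) (u j))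
    (hx : ∀ i, ‖x i‖ ≤ C) (n : ℕ) :
    weightedSum u ((matAct A)^[n] x) = weightedSum u x := by
  induction n with
  | zero => rfl
  | succ n ih =>
    rw [Function.iterate_succ_apply', weightedSum_matAct hpos hrow hu_nn hu_sum hu_inv
      (norm_iterate_matAct_le hpos hrow hx n), ih]

lemma norm_mul_weightedSum_sub_le_of_approx (hpos : ∀ i j, 0 ≤ A i j)
    (hrow : ∀ i, HasSum (fun j => A i j) 1) {u : ℕ → ℝ} (hu_nn : ∀ i, 0 ≤ u i)
    (hu_sum : HasSum u 1) (hu_inv : ∀ j, HasSum (fun i => u i * A i j) (u j))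
    (hx : ∀ i, ‖x i‖ ≤ C) {z : ℕ → ℂ} {D ε : ℝ} (hz : ∀ i, ‖z i‖ ≤ D) {lam : ℂ} {n : ℕ}
    (happrox : ∀ i, ‖lam * (matAct A)^[n] x i - z i‖ ≤ ε) :
    ‖lam * weightedSum u x - weightedSum u z‖ ≤ ε := by
  have horbit : ∀ i, ‖lam * (matAct A)^[n] x i‖ ≤ ‖lam‖ * C := fun i => by
    rw [norm_mul]
    exact mul_le_mul_of_nonneg_left (norm_iterate_matAct_le hpos hrow hx n i) (norm_nonneg _)
  rw [← weightedSum_iterate_matAct hpos hrow hu_nn hu_sum hu_inv hx n, ← weightedSum_const_mul]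
  exact norm_weightedSum_sub_le hu_nn hu_sum horbit hz happrox

end StochasticMatrix

theorem stmt1_general (A : ℕ → ℕ → ℝ)
    (hpos : ∀ i j, 0 ≤ A i j)
    (hrow : ∀ i, HasSum (fun j => A i j) 1)
    (u : ℕ → ℝ) (hu_nn : ∀ i, 0 ≤ u i) (hu_sum : HasSum u 1)
    (hu_inv : ∀ j, HasSum (fun i => u i * A i j) (u j)) :
    ¬ ∃ y : ℕ → ℂ, Tendsto y atTop (nhds 0) ∧
        ∀ z : ℕ → ℂ, Tendsto z atTop (nhds 0) → ∀ ε : ℝ, 0 < ε →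
          ∃ (lam : ℂ) (n : ℕ), ∀ i, ‖lam * (matAct A)^[n] y i - z i‖ < ε := by
  rintro ⟨y, hy0, hy⟩
  obtain ⟨C, hC⟩ := exists_norm_le_of_tendsto hy0
  have hC0 : 0 ≤ C := (norm_nonneg _).trans (hC 0)
  set c := weightedSum u y
  set M : ℝ := 3 / (2 * ‖c‖) * C + 1
  obtain ⟨k, hk⟩ := exists_pos_of_hasSum_one hu_sum
  obtain ⟨z, hz0, hzM, hz1⟩ :=
    exists_tendsto_zero_weightedSum_eq (m := k + 1) hk.ne' (by omega) 1 (M : ℂ)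
  obtain ⟨D, hD⟩ := exists_norm_le_of_tendsto hz0
  obtain ⟨lam, n, happrox⟩ := hy z hz0 (1 / 2) one_half_pos
  have hfun : ‖lam * c - 1‖ ≤ 1 / 2 := by
    simpa only [hz1] using norm_mul_weightedSum_sub_le_of_approx hpos hrow hu_nn hu_sum hu_inv
      hC hD fun i => (happrox i).le
  have hlam : ‖lam‖ ≤ 3 / (2 * ‖c‖) := by
    have h := (abs_norm_sub_norm_le (lam * c) 1).trans hfun
    rw [norm_mul, norm_one, abs_le] at h
    have hc : 0 < ‖c‖ := by nlinarith [norm_nonneg c, norm_nonneg lam]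
    rw [le_div_iff₀ (by positivity)]
    linarith
  have hcoord : M - 1 / 2 < ‖lam‖ * C := by
    have h := norm_sub_norm_le (z (k + 1)) (lam * (matAct A)^[n] y (k + 1))
    rw [norm_sub_rev, hzM, Complex.norm_real, Real.norm_of_nonneg (by positivity), norm_mul] at h
    have happrox' := happrox (k + 1)
    rw [hzM] at happrox'
    linarith [mul_le_mul_of_nonneg_left (norm_iterate_matAct_le hpos hrow hC n (k + 1))
      (norm_nonneg lam)]
  linarith [mul_le_mul_of_nonneg_right hlam hC0]

/-- An irreducible stochastic matrix which is positive recurrent (has an invariant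
probability vector `u ∈ l¹`), acting as a bounded linear operator on `c₀`,
is not supercyclic on `c₀`: no `y ∈ c₀` has a projective orbit that is dense in `c₀`
(with respect to the sup norm). -/
theorem stmt1 (A : ℕ → ℕ → ℝ)
    (hpos : ∀ i j, 0 ≤ A i j)
    (hrow : ∀ i, HasSum (fun j => A i j) 1)
    (hirr : ∀ i j, ∃ n, 0 < matPow A n i j)
    (u : ℕ → ℝ) (hu_nn : ∀ i, 0 ≤ u i) (hu_sum : HasSum u 1)
    (hu_inv : ∀ j, HasSum (fun i => u i * A i j) (u j))
    (hc0 : ∀ x : ℕ → ℂ, Tendsto x atTop (nhds 0) → Tendsto (matAct A x) atTop (nhds 0)) :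
    ¬ ∃ y : ℕ → ℂ, Tendsto y atTop (nhds 0) ∧
        ∀ z : ℕ → ℂ, Tendsto z atTop (nhds 0) → ∀ ε : ℝ, 0 < ε →
          ∃ (lam : ℂ) (n : ℕ), ∀ i, ‖lam * (matAct A)^[n] y i - z i‖ < ε :=
  stmt1_general A hpos hrow u hu_nn hu_sum hu_inv
end

section
/- Let p ∈ (0,1) and let X be c_0 or l^q for some q ≥ 1. The point spectrum of W_p on X is nonempty if and only if p > 1/2; moreover, when p > 1/2, 0 belongs to the point spectrum, i.e. there exists a nonzero u ∈ X with W_p u = 0. -/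
open Filter

/-- The transition operator of the simple random walk on `ℤ₊` with partial reflection
at `0` and jump probability `p`: `(W_p x)_0 = (1-p) x_0 + p x_1` and
`(W_p x)_i = (1-p) x_{i-1} + p x_{i+1}` for `i ≥ 1`. -/
noncomputable def Wop (p : ℝ) (x : ℕ → ℂ) : ℕ → ℂ := fun i =>
  if i = 0 then ((1 - p : ℝ) : ℂ) * x 0 + (p : ℂ) * x 1
  else ((1 - p : ℝ) : ℂ) * x (i - 1) + (p : ℂ) * x (i + 1)

/-- Membership in `c₀`: sequences tending to `0`. -/
def memc0 (x : ℕ → ℂ) : Prop := Filter.Tendsto x Filter.atTop (nhds 0)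

/-- Membership in `ℓ^q`: `∑ ‖x n‖^q < ∞`. -/
def memlq (q : ℝ) (x : ℕ → ℂ) : Prop := Summable (fun n => ‖x n‖ ^ q)

/-- Sup-norm distance between `x` and `z` is (at most) `ε`, coordinatewise strict form. -/
def distC0lt (x z : ℕ → ℂ) (ε : ℝ) : Prop := ∀ i, ‖x i - z i‖ < ε

/-- The `q`-th power of the `ℓ^q` distance between `x` and `z` is `< ε`. -/
def distLqlt (q : ℝ) (x z : ℕ → ℂ) (ε : ℝ) : Prop := (∑' i, ‖x i - z i‖ ^ q) < ε

open Topology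

/-!
For `i ≥ 1` the eigenvalue equation `W_p u = λ u` is the linear recurrence
`p u_{i+1} - λ u_i + (1 - p) u_{i-1} = 0`, whose characteristic roots satisfy
`z₁ z₂ = (1 - p) / p`. If `p ≤ 1/2`, one root, say `z₂`, has `‖z₂‖ ≥ 1`; then `u_{n+1} - z₁ u_n`
is geometric of ratio `z₂` and tends to `0`, so it vanishes and `u_n = z₁ ^ n u_0`. The equation at
`0` then forces `z₁ = 1` or `u_0 = 0`, and either way `u = 0` in `c₀ ⊇ ℓ^q`. If `p > 1/2`, the
sequence `1, c, c, c², c², …` with `c = -(1 - p) / p`, chosen so that `(1 - p) + p c = 0`, is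
annihilated by `W_p`, and it lies in every `ℓ^q` because `‖c‖ < 1`.
-/

open Polynomial in
lemma exists_sum_mul_eq_and_prod_mul_eq {K : Type*} [Field K] [IsAlgClosed K] {a : K} (ha : a ≠ 0)
    (b c : K) : ∃ z₁ z₂ : K, a * (z₁ + z₂) = b ∧ a * (z₁ * z₂) = c := by
  obtain ⟨z, hz⟩ := IsAlgClosed.exists_root (C a * X ^ 2 + C (-b) * X + C c)
    (by rw [degree_quadratic ha]; decide)
  refine ⟨z, b / a - z, by field_simp; ring, ?_⟩
  simp only [IsRoot, eval_add, eval_mul, eval_C, eval_pow, eval_X] at hz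
  field_simp
  linear_combination -hz

lemma eq_zero_of_norm_le_succ_of_tendsto_zero {E : Type*} [NormedAddCommGroup E] {w : ℕ → E}
    (hmono : ∀ n, ‖w n‖ ≤ ‖w (n + 1)‖) (hw : Tendsto w atTop (𝓝 0)) : w = 0 :=
  funext fun n => norm_le_zero_iff.1 <|
    (monotone_nat_of_le_succ hmono).ge_of_tendsto (tendsto_zero_iff_norm_tendsto_zero.1 hw) n

lemma succ_eq_mul_of_tendsto_zero {𝕜 : Type*} [NormedField 𝕜] {a b : 𝕜} {u : ℕ → 𝕜}
    (hb : 1 ≤ ‖b‖) (hrec : ∀ n, u (n + 2) = (a + b) * u (n + 1) - a * b * u n)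
    (hu : Tendsto u atTop (𝓝 0)) (n : ℕ) : u (n + 1) = a * u n := by
  set w : ℕ → 𝕜 := fun n => u (n + 1) - a * u n
  have hstep : ∀ n, w (n + 1) = b * w n := fun n => by simp only [w, hrec n]; ring
  have hw : Tendsto w atTop (𝓝 0) := by
    simpa using (hu.comp (tendsto_add_atTop_nat 1)).sub (hu.const_mul a)
  have hmono : ∀ n, ‖w n‖ ≤ ‖w (n + 1)‖ := fun n => by
    rw [hstep, norm_mul]; exact le_mul_of_one_le_left (norm_nonneg _) hb
  exact sub_eq_zero.1 (congrFun (eq_zero_of_norm_le_succ_of_tendsto_zero hmono hw) n)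

lemma memc0_of_memlq {q : ℝ} (hq : 0 < q) {u : ℕ → ℂ} (h : memlq q u) : memc0 u := by
  have hlim : Tendsto (fun n => (‖u n‖ ^ q) ^ q⁻¹) atTop (𝓝 0) := by
    simpa [Real.zero_rpow (inv_ne_zero hq.ne')] using
      h.tendsto_atTop_zero.rpow_const (p := q⁻¹) (Or.inr (inv_nonneg.2 hq.le))
  refine tendsto_zero_iff_norm_tendsto_zero.2 (hlim.congr fun n => ?_)
  exact Real.rpow_rpow_inv (norm_nonneg _) hq.ne'

lemma memlq_of_norm_le_pow {q s : ℝ} (hq : 0 < q) (hs0 : 0 ≤ s) (hs1 : s < 1) {u : ℕ → ℂ}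
    (hu : ∀ n, ‖u n‖ ≤ s ^ n) : memlq q u := by
  refine Summable.of_nonneg_of_le (fun n => Real.rpow_nonneg (norm_nonneg _) q) (fun n => ?_)
    (summable_geometric_of_lt_one (Real.rpow_nonneg hs0 q) (Real.rpow_lt_one hs0 hs1 hq))
  calc ‖u n‖ ^ q ≤ (s ^ n) ^ q := Real.rpow_le_rpow (norm_nonneg _) (hu n) hq.le
    _ = (s ^ q) ^ n := by
      rw [← Real.rpow_natCast, ← Real.rpow_natCast, ← Real.rpow_mul hs0, ← Real.rpow_mul hs0,
        mul_comm]

lemma Wop_apply_zero (p : ℝ) (x : ℕ → ℂ) : Wop p x 0 = ((1 - p : ℝ) : ℂ) * x 0 + p * x 1 := rfl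

lemma Wop_apply_succ (p : ℝ) (x : ℕ → ℂ) (n : ℕ) :
    Wop p x (n + 1) = ((1 - p : ℝ) : ℂ) * x n + p * x (n + 2) := rfl

lemma Wop_eigen_recurrence {p : ℝ} (hp : p ≠ 0) {lam z₁ z₂ : ℂ} {u : ℕ → ℂ}
    (hsum : (p : ℂ) * (z₁ + z₂) = lam) (hprod : (p : ℂ) * (z₁ * z₂) = ((1 - p : ℝ) : ℂ))
    (heig : Wop p u = fun i => lam * u i) (n : ℕ) :
    u (n + 2) = (z₁ + z₂) * u (n + 1) - z₁ * z₂ * u n := by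
  have h := congrFun heig (n + 1)
  rw [Wop_apply_succ] at h
  refine mul_left_cancel₀ (Complex.ofReal_ne_zero.2 hp) ?_
  linear_combination h + u n * hprod - u (n + 1) * hsum

lemma eq_zero_of_Wop_eigen_of_one_le_norm {p : ℝ} (hp : p ≠ 0) {lam z₁ z₂ : ℂ} {u : ℕ → ℂ}
    (hsum : (p : ℂ) * (z₁ + z₂) = lam) (hprod : (p : ℂ) * (z₁ * z₂) = ((1 - p : ℝ) : ℂ))
    (hz₂ : 1 ≤ ‖z₂‖) (hu : memc0 u) (heig : Wop p u = fun i => lam * u i) : u = 0 := by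
  have hgeom : ∀ n, u n = z₁ ^ n * u 0 := by
    intro n
    induction n with
    | zero => rw [pow_zero, one_mul]
    | succ n ih =>
      rw [succ_eq_mul_of_tendsto_zero hz₂ (Wop_eigen_recurrence hp hsum hprod heig) hu, ih,
        pow_succ']
      ring
  suffices hu0 : u 0 = 0 by funext n; rw [hgeom n, hu0, mul_zero]; rfl
  by_contra hu0
  have hboundary : (p : ℂ) * z₂ * (z₁ - 1) * u 0 = 0 := by
    have h := congrFun heig 0
    rw [Wop_apply_zero, hgeom 1, pow_one] at h
    linear_combination h + u 0 * hprod - u 0 * hsum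
  have hz₂0 : z₂ ≠ 0 := by rintro rfl; norm_num at hz₂
  have hz₁ : z₁ = 1 := by
    simpa [hp, hz₂0, hu0, sub_eq_zero] using hboundary
  refine hu0 (tendsto_const_nhds_iff.1 (hu.congr fun n => ?_))
  rw [hgeom n, hz₁, one_pow, one_mul]

lemma eq_zero_of_Wop_eigen {p : ℝ} (hp0 : p ≠ 0) (hp : p ≤ 1 / 2) {lam : ℂ} {u : ℕ → ℂ}
    (hu : memc0 u) (heig : Wop p u = fun i => lam * u i) : u = 0 := by
  obtain ⟨z₁, z₂, hsum, hprod⟩ :=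
    exists_sum_mul_eq_and_prod_mul_eq (Complex.ofReal_ne_zero.2 hp0) lam ((1 - p : ℝ) : ℂ)
  have hnorm : 1 ≤ ‖z₁‖ * ‖z₂‖ := by
    have h := congrArg norm hprod
    rw [norm_mul, norm_mul, Complex.norm_real, Complex.norm_real] at h
    have hle : ‖p‖ ≤ ‖1 - p‖ := abs_le_abs (by linarith) (by linarith)
    nlinarith [norm_pos_iff.2 hp0]
  rcases le_total ‖z₁‖ ‖z₂‖ with hle | hle
  · exact eq_zero_of_Wop_eigen_of_one_le_norm hp0 hsum hprod
      (by nlinarith [norm_nonneg z₁]) hu heig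
  · exact eq_zero_of_Wop_eigen_of_one_le_norm (z₁ := z₂) (z₂ := z₁) hp0
      (by linear_combination hsum) (by linear_combination hprod)
      (by nlinarith [norm_nonneg z₂]) hu heig

lemma Wop_pow_half_eq_zero {p : ℝ} {c : ℂ} (hc : ((1 - p : ℝ) : ℂ) + p * c = 0) :
    Wop p (fun n => c ^ ((n + 1) / 2)) = 0 := by
  funext n
  cases n with
  | zero => simpa [Wop_apply_zero] using hc
  | succ n =>
    rw [Wop_apply_succ, show (n + 2 + 1) / 2 = (n + 1) / 2 + 1 by omega, pow_succ, Pi.zero_apply]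
    linear_combination c ^ ((n + 1) / 2) * hc

lemma norm_pow_half_le {c : ℂ} (hc : ‖c‖ ≤ 1) (n : ℕ) :
    ‖c ^ ((n + 1) / 2)‖ ≤ √‖c‖ ^ n := by
  conv_lhs => rw [norm_pow, ← Real.sq_sqrt (norm_nonneg c), ← pow_mul]
  exact pow_le_pow_of_le_one (Real.sqrt_nonneg _) (Real.sqrt_le_one.2 hc)
    (by omega : n ≤ 2 * ((n + 1) / 2))

lemma exists_Wop_eq_zero {p : ℝ} (hp : 1 / 2 < p) :
    ∃ u : ℕ → ℂ, u ≠ 0 ∧ Wop p u = 0 ∧ ∀ q : ℝ, 0 < q → memlq q u := by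
  have hp0 : (p : ℂ) ≠ 0 := Complex.ofReal_ne_zero.2 (by positivity)
  set c : ℂ := -(((1 - p) / p : ℝ) : ℂ)
  have hc : ((1 - p : ℝ) : ℂ) + p * c = 0 := by simp only [c]; push_cast; field_simp; ring
  have hc1 : ‖c‖ < 1 := by
    rw [norm_neg, Complex.norm_real, norm_div, Real.norm_eq_abs, Real.norm_eq_abs,
      abs_of_pos (by linarith : 0 < p), div_lt_one (by linarith)]
    exact abs_sub_lt_iff.2 ⟨by linarith, by linarith⟩
  refine ⟨fun n => c ^ ((n + 1) / 2), fun h => by simpa using congrFun h 0,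
    Wop_pow_half_eq_zero hc, fun q hq => ?_⟩
  exact memlq_of_norm_le_pow hq (Real.sqrt_nonneg _)
    ((Real.sqrt_lt' one_pos).2 (by simpa using hc1)) (norm_pow_half_le hc1.le)

theorem stmt9_general (p : ℝ) (hp0 : 0 < p) :
    ((∃ (lam : ℂ) (u : ℕ → ℂ), u ≠ 0 ∧ memc0 u ∧ Wop p u = fun i => lam * u i) ↔
      1/2 < p) ∧
    (∀ q : ℝ, 1 ≤ q →
      ((∃ (lam : ℂ) (u : ℕ → ℂ), u ≠ 0 ∧ memlq q u ∧ Wop p u = fun i => lam * u i) ↔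
        1/2 < p)) ∧
    (1/2 < p →
      (∃ u : ℕ → ℂ, u ≠ 0 ∧ memc0 u ∧ Wop p u = 0) ∧
      ∀ q : ℝ, 1 ≤ q → ∃ u : ℕ → ℂ, u ≠ 0 ∧ memlq q u ∧ Wop p u = 0) := by
  have hc0 : (∃ (lam : ℂ) (u : ℕ → ℂ), u ≠ 0 ∧ memc0 u ∧ Wop p u = fun i => lam * u i) →
      1/2 < p := by
    rintro ⟨lam, u, hne, hu, heig⟩
    by_contra! hp
    exact hne (eq_zero_of_Wop_eigen hp0.ne' hp hu heig)
  have hkernel (hp : 1/2 < p) :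
      (∃ u : ℕ → ℂ, u ≠ 0 ∧ memc0 u ∧ Wop p u = 0) ∧
      ∀ q : ℝ, 1 ≤ q → ∃ u : ℕ → ℂ, u ≠ 0 ∧ memlq q u ∧ Wop p u = 0 := by
    obtain ⟨u, hne, hW, hlq⟩ := exists_Wop_eq_zero hp
    exact ⟨⟨u, hne, memc0_of_memlq one_pos (hlq 1 one_pos), hW⟩,
      fun q hq => ⟨u, hne, hlq q (by linarith), hW⟩⟩
  have heig {u : ℕ → ℂ} (hW : Wop p u = 0) : Wop p u = fun i => 0 * u i :=
    hW.trans (funext fun i => (zero_mul (u i)).symm)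
  refine ⟨⟨hc0, fun hp => ?_⟩, fun q hq => ⟨?_, fun hp => ?_⟩, hkernel⟩
  · obtain ⟨u, hne, hu, hW⟩ := (hkernel hp).1
    exact ⟨0, u, hne, hu, heig hW⟩
  · rintro ⟨lam, u, hne, hu, hW⟩
    exact hc0 ⟨lam, u, hne, memc0_of_memlq (by linarith) hu, hW⟩
  · obtain ⟨u, hne, hu, hW⟩ := (hkernel hp).2 q hq
    exact ⟨0, u, hne, hu, heig hW⟩

/-- For `p ∈ (0,1)`, the point spectrum of `W_p` on `c₀` (resp. on `ℓ^q`, `q ≥ 1`)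
is nonempty if and only if `p > 1/2`; moreover when `p > 1/2`, `0` is an eigenvalue,
i.e. there is a nonzero `u` in the space with `W_p u = 0`. -/
theorem stmt9 (p : ℝ) (hp0 : 0 < p) (hp1 : p < 1) :
    ((∃ (lam : ℂ) (u : ℕ → ℂ), u ≠ 0 ∧ memc0 u ∧ Wop p u = fun i => lam * u i) ↔
      1/2 < p) ∧
    (∀ q : ℝ, 1 ≤ q →
      ((∃ (lam : ℂ) (u : ℕ → ℂ), u ≠ 0 ∧ memlq q u ∧ Wop p u = fun i => lam * u i) ↔
        1/2 < p)) ∧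
    (1/2 < p →
      (∃ u : ℕ → ℂ, u ≠ 0 ∧ memc0 u ∧ Wop p u = 0) ∧
      ∀ q : ℝ, 1 ≤ q → ∃ u : ℕ → ℂ, u ≠ 0 ∧ memlq q u ∧ Wop p u = 0) :=
  stmt9_general p hp0
end

section
/- For p = 1/2, every real number λ with −1 < λ < 1 is an eigenvalue of W_{1/2} acting on l^∞: there exists a nonzero bounded complex sequence u with W_{1/2} u = λ u. Hence the open interval (−1,1) is contained in the point spectrum of W_{1/2} on l^∞. -/
/-!
With `λ = cos θ`, the sum-to-product formula `(cos (x - θ) + cos (x + θ)) / 2 = cos θ cos x`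
shows that `u n = cos ((n + 1/2) θ)` satisfies the interior equations of `W_{1/2} u = λ u`.
The half-integer shift makes the sequence symmetric about `-1/2` (`u (-1) = u 0`), which is
exactly the partial reflection at `0`. For real `θ ∈ [0, π)` the sequence is bounded by `1`
and `u 0 = cos (θ / 2) > 0`.
-/

open Filter

open Complex in
lemma half_cos_sub_add_half_cos_add (x θ : ℂ) :
    1 / 2 * cos (x - θ) + 1 / 2 * cos (x + θ) = cos θ * cos x := by
  rw [cos_sub, cos_add]; ring

noncomputable def cosWave (θ : ℂ) (n : ℕ) : ℂ := Complex.cos ((n + 1 / 2) * θ)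

lemma Wop_half_cosWave (θ : ℂ) :
    Wop (1 / 2) (cosWave θ) = fun i => Complex.cos θ * cosWave θ i := by
  funext i
  have hp : ((1 - 1 / 2 : ℝ) : ℂ) = 1 / 2 := by norm_num
  rcases i with _ | n
  · rw [Wop, if_pos rfl, hp]
    simp only [cosWave]
    rw [← half_cos_sub_add_half_cos_add, ← Complex.cos_neg ((_ + 1 / 2) * θ - θ)]
    push_cast
    ring_nf
  · rw [Wop, if_neg n.succ_ne_zero, hp]
    simp only [cosWave]
    rw [← half_cos_sub_add_half_cos_add]
    push_cast
    ring_nf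

lemma norm_cosWave_ofReal_le_one (θ : ℝ) (n : ℕ) : ‖cosWave θ n‖ ≤ 1 := by
  rw [cosWave, show ((n : ℂ) + 1 / 2) * θ = ((n + 1 / 2 : ℝ) * θ : ℝ) by push_cast; ring,
    ← Complex.ofReal_cos, Complex.norm_real]
  exact Real.abs_cos_le_one _

lemma cosWave_ofReal_zero_pos {θ : ℝ} (h0 : 0 ≤ θ) (hπ : θ < Real.pi) :
    0 < (cosWave θ 0).re := by
  rw [cosWave, show ((0 : ℕ) + 1 / 2 : ℂ) * θ = ((θ / 2 : ℝ) : ℂ) by push_cast; ring,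
    ← Complex.ofReal_cos, Complex.ofReal_re]
  exact Real.cos_pos_of_mem_Ioo ⟨by linarith [Real.pi_pos], by linarith⟩

/-- For `p = 1/2`, every real `λ ∈ (-1,1)` is an eigenvalue of `W_{1/2}` acting on `l^∞`:
there is a nonzero bounded complex sequence `u` with `W_{1/2} u = λ u`.  Hence `(-1,1)`
is contained in the point spectrum of `W_{1/2}` on `l^∞`. -/
theorem stmt10 (lam : ℝ) (h1 : -1 < lam) (h2 : lam < 1) :
    ∃ u : ℕ → ℂ, u ≠ 0 ∧ (∃ C : ℝ, ∀ n, ‖u n‖ ≤ C) ∧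
      Wop (1/2) u = fun i => (lam : ℂ) * u i := by
  set θ := Real.arccos lam
  have hcos : Complex.cos θ = lam := by
    rw [← Complex.ofReal_cos, Real.cos_arccos h1.le h2.le]
  refine ⟨cosWave θ, fun h => ?_, ⟨1, norm_cosWave_ofReal_le_one θ⟩, ?_⟩
  · have := cosWave_ofReal_zero_pos (Real.arccos_nonneg lam) (Real.arccos_lt_pi.2 h1)
    rw [h] at this
    simp at this
  · rw [Wop_half_cosWave, hcos]
end

section
/- Let p ∈ (1/2, 1) and let X be c_0 or l^q for some q ≥ 1. Then for every v = (v_i)_{i≥0} ∈ X there exists u = (u_i)_{i≥0} ∈ X with W_p u = v. Moreover, the solution u with u_0 = 0, given explicitly by u_n = (1/p) Σ_{j=0}^{⌊(n-1)/2⌋} ((p−1)/p)^j v_{n−2j−1} for n ≥ 1, satisfies ‖u‖ ≤ ‖v‖/(2p−1), where ‖·‖ denotes the norm of X. -/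
/-! With `r = (p - 1) / p` and `S` the right shift, the explicit solution is the series
`Sinv p v = (1 / p) ∑ⱼ rʲ S^(2j+1) v`. The shift is an isometry of `c₀` and of every `ℓ^q`,
and `p > 1/2` means `|r| < 1`, so the series converges absolutely, with norm at most
`(1 / p) ∑ⱼ |r|ʲ ‖v‖ = ‖v‖ / (2p - 1)`. It solves `W_p u = v` because of the recurrence
`p u_{n+2} = v_{n+1} - (1 - p) u_n` together with `u_0 = 0`, `u_1 = v_0 / p`. -/

open Filter

/-- The explicit right inverse of `W_p` with `u_0 = 0`:
`u_n = (1/p) ∑_{j=0}^{⌊(n-1)/2⌋} ((p-1)/p)^j v_{n-2j-1}` for `n ≥ 1`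
(note `⌊(n-1)/2⌋ + 1 = ⌊(n+1)/2⌋` terms). -/
noncomputable def Sinv (p : ℝ) (v : ℕ → ℂ) : ℕ → ℂ := fun n =>
  if n = 0 then 0 else
    (1 / (p : ℂ)) * ∑ j ∈ Finset.range ((n + 1) / 2),
      (((p - 1) / p : ℝ) : ℂ) ^ j * v (n - 2*j - 1)

open Topology
open scoped ENNReal

def rshift {E : Type*} [Zero E] (k : ℕ) (v : ℕ → E) : ℕ → E :=
  fun n => if k ≤ n then v (n - k) else 0

section rshift

variable {E : Type*}

lemma rshift_add_apply [Zero E] (k : ℕ) (v : ℕ → E) (n : ℕ) :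
    rshift k v (n + k) = v n := by
  simp [rshift]

lemma rshift_add_apply_add [Zero E] (k m : ℕ) (v : ℕ → E) (n : ℕ) :
    rshift (k + m) v (n + m) = rshift k v n := by
  simp [rshift, Nat.add_sub_add_right]

lemma rshift_apply_of_le [Zero E] {k n : ℕ} (h : k ≤ n) (v : ℕ → E) :
    rshift k v n = v (n - k) :=
  if_pos h

lemma rshift_apply_of_lt [Zero E] {k n : ℕ} (h : n < k) (v : ℕ → E) : rshift k v n = 0 :=
  if_neg h.not_ge

lemma hasSum_comp_rshift_iff [Zero E] {G : Type*} [AddCommMonoid G] [TopologicalSpace G]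
    {f : E → G} (hf : f 0 = 0) (k : ℕ) (v : ℕ → E) {a : G} :
    HasSum (fun n => f (rshift k v n)) a ↔ HasSum (fun n => f (v n)) a := by
  rw [← (add_left_injective k).hasSum_iff]
  · simp only [Function.comp_def, rshift_add_apply]
  · rintro n hn
    have : n < k := by
      by_contra! h
      exact hn ⟨n - k, Nat.sub_add_cancel h⟩
    simp [rshift_apply_of_lt this, hf]

lemma norm_rshift_apply_le [SeminormedAddGroup E] {v : ℕ → E} {M : ℝ} (hM0 : 0 ≤ M)
    (hM : ∀ i, ‖v i‖ ≤ M) (k n : ℕ) : ‖rshift k v n‖ ≤ M := by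
  unfold rshift
  split_ifs
  exacts [hM _, by simpa using hM0]

lemma tendsto_rshift [Zero E] [TopologicalSpace E] {v : ℕ → E} {a : E}
    (hv : Tendsto v atTop (𝓝 a)) (k : ℕ) : Tendsto (rshift k v) atTop (𝓝 a) := by
  refine (hv.comp (tendsto_sub_atTop_nat k)).congr' ?_
  filter_upwards [eventually_ge_atTop k] with n hn
  exact (rshift_apply_of_le hn v).symm

variable [NormedAddCommGroup E] {q : ℝ≥0∞}

lemma hasSum_rpow_norm_rshift_iff (hq : 0 < q.toReal) (v : ℕ → E) (k : ℕ) {a : ℝ} :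
    HasSum (fun n => ‖rshift k v n‖ ^ q.toReal) a ↔ HasSum (fun n => ‖v n‖ ^ q.toReal) a :=
  hasSum_comp_rshift_iff (f := fun x : E => ‖x‖ ^ q.toReal) (by simp [hq.ne']) k v

lemma memℓp_rshift (hq : 0 < q.toReal) {v : ℕ → E} (hv : Memℓp v q) (k : ℕ) :
    Memℓp (rshift k v) q := by
  rw [memℓp_gen_iff hq] at hv ⊢
  exact ((hasSum_rpow_norm_rshift_iff hq v k).2 hv.hasSum).summable

lemma lp.norm_rshift (hq : 0 < q.toReal) (v : lp (fun _ : ℕ => E) q) (k : ℕ) :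
    ‖(⟨rshift k v, memℓp_rshift hq v.2 k⟩ : lp (fun _ : ℕ => E) q)‖ = ‖v‖ := by
  rw [lp.norm_eq_tsum_rpow hq, lp.norm_eq_tsum_rpow hq]
  congr 1
  exact ((hasSum_rpow_norm_rshift_iff hq v k).2
    ((memℓp_gen_iff hq).1 v.2).hasSum).tsum_eq

end rshift

noncomputable def sinvCoeff (p : ℝ) (j : ℕ) : ℂ := (1 / (p : ℂ)) * (((p - 1) / p : ℝ) : ℂ) ^ j

lemma hasSum_norm_sinvCoeff {p : ℝ} (hp : 1 / 2 < p) (hp1 : p < 1) :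
    HasSum (fun j => ‖sinvCoeff p j‖) (1 / (2 * p - 1)) := by
  have hp0 : 0 < p := by linarith
  have hr : ‖(((p - 1) / p : ℝ) : ℂ)‖ = (1 - p) / p := by
    rw [Complex.norm_real, Real.norm_eq_abs, abs_div, abs_of_neg (by linarith : p - 1 < 0),
      abs_of_pos hp0, neg_sub]
  have hgeom := (hasSum_geometric_of_lt_one (by positivity : 0 ≤ (1 - p) / p)
    ((div_lt_one hp0).2 (by linarith))).mul_left (1 / p)
  have hnorm : ∀ j, ‖sinvCoeff p j‖ = 1 / p * ((1 - p) / p) ^ j := fun j => by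
    rw [sinvCoeff, norm_mul, norm_pow, hr, norm_div, norm_one, Complex.norm_real,
      Real.norm_eq_abs, abs_of_pos hp0]
  have hsum : 1 / p * (1 - (1 - p) / p)⁻¹ = 1 / (2 * p - 1) := by
    field_simp
    ring
  simpa only [hnorm, hsum] using hgeom

lemma hasSum_sinv (p : ℝ) (v : ℕ → ℂ) (n : ℕ) :
    HasSum (fun j => sinvCoeff p j * rshift (2 * j + 1) v n) (Sinv p v n) := by
  have hS : Sinv p v n = ∑ j ∈ Finset.range ((n + 1) / 2),
      sinvCoeff p j * rshift (2 * j + 1) v n := by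
    rcases eq_or_ne n 0 with rfl | hn
    · simp [Sinv]
    rw [Sinv, if_neg hn, Finset.mul_sum]
    refine Finset.sum_congr rfl fun j hj => ?_
    rw [Finset.mem_range] at hj
    rw [rshift_apply_of_le (by omega), sinvCoeff, Nat.sub_sub]
    ring
  rw [hS]
  refine hasSum_sum_of_ne_finset_zero fun j hj => ?_
  rw [Finset.mem_range] at hj
  rw [rshift_apply_of_lt (by omega), mul_zero]

lemma sinv_add_two (p : ℝ) (v : ℕ → ℂ) (n : ℕ) :
    Sinv p v (n + 2) = (1 / p) * v (n + 1) + (((p - 1) / p : ℝ) : ℂ) * Sinv p v n := by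
  -- past the `j = 0` term, the series for `Sinv p v (n + 2)` is `r` times that for `Sinv p v n`
  have htail := (hasSum_nat_add_iff' 1).2 (hasSum_sinv p v (n + 2))
  have hstep : ∀ j, sinvCoeff p (j + 1) * rshift (2 * (j + 1) + 1) v (n + 2)
      = (((p - 1) / p : ℝ) : ℂ) * (sinvCoeff p j * rshift (2 * j + 1) v n) := fun j => by
    rw [show 2 * (j + 1) + 1 = (2 * j + 1) + 2 by ring, rshift_add_apply_add, sinvCoeff,
      sinvCoeff, pow_succ]
    ring
  simp only [hstep, Finset.sum_range_one] at htail
  have := htail.unique ((hasSum_sinv p v n).mul_left _)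
  rw [sinvCoeff, pow_zero, mul_one, rshift_apply_of_le (by omega),
    show n + 2 - (2 * 0 + 1) = n + 1 by omega] at this
  rw [← this]
  ring

lemma wop_sinv {p : ℝ} (hp : p ≠ 0) (v : ℕ → ℂ) : Wop p (Sinv p v) = v := by
  have hP : (p : ℂ) ≠ 0 := by exact_mod_cast hp
  ext (_ | i)
  · simp [Wop, Sinv, hP]
  · simp only [Wop, Nat.add_one_ne_zero, if_false, Nat.add_sub_cancel, sinv_add_two]
    push_cast
    field_simp
    ring

section Bounds

variable {p : ℝ} (hp : 1 / 2 < p) (hp1 : p < 1)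
include hp hp1

lemma norm_sinv_le {v : ℕ → ℂ} {M : ℝ} (hM : ∀ i, ‖v i‖ ≤ M) (n : ℕ) :
    ‖Sinv p v n‖ ≤ M / (2 * p - 1) := by
  have hM0 : 0 ≤ M := (norm_nonneg _).trans (hM 0)
  rw [← (hasSum_sinv p v n).tsum_eq]
  refine (tsum_of_norm_bounded ((hasSum_norm_sinvCoeff hp hp1).mul_right M) fun j => ?_).trans_eq
    (by ring)
  rw [norm_mul]
  exact mul_le_mul_of_nonneg_left (norm_rshift_apply_le hM0 hM _ _) (norm_nonneg _)

lemma tendsto_sinv {v : ℕ → ℂ} (hv : Tendsto v atTop (𝓝 0)) :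
    Tendsto (Sinv p v) atTop (𝓝 0) := by
  obtain ⟨M, hM⟩ := hv.norm.bddAbove_range
  have hM' : ∀ i, ‖v i‖ ≤ M := fun i => hM ⟨i, rfl⟩
  have hM0 : 0 ≤ M := (norm_nonneg _).trans (hM' 0)
  have hlim := tendsto_tsum_of_dominated_convergence
    ((hasSum_norm_sinvCoeff hp hp1).mul_right M).summable
    (fun j => (tendsto_rshift hv (2 * j + 1)).const_mul (sinvCoeff p j))
    (Eventually.of_forall fun n j => by
      rw [norm_mul]
      exact mul_le_mul_of_nonneg_left (norm_rshift_apply_le hM0 hM' _ _) (norm_nonneg _))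
  simpa only [(hasSum_sinv p v _).tsum_eq, mul_zero, tsum_zero] using hlim

lemma exists_lp_eq_sinv {q : ℝ≥0∞} [Fact (1 ≤ q)] (hq : 0 < q.toReal)
    (v : lp (fun _ : ℕ => ℂ) q) :
    ∃ u : lp (fun _ : ℕ => ℂ) q, ⇑u = Sinv p v ∧ ‖u‖ ≤ ‖v‖ / (2 * p - 1) := by
  set F : ℕ → lp (fun _ : ℕ => ℂ) q :=
    fun j => sinvCoeff p j • ⟨rshift (2 * j + 1) v, memℓp_rshift hq v.2 _⟩
  have hF : HasSum (fun j => ‖F j‖) (1 / (2 * p - 1) * ‖v‖) := by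
    simpa only [F, norm_smul, lp.norm_rshift hq] using
      (hasSum_norm_sinvCoeff hp hp1).mul_right ‖v‖
  refine ⟨∑' j, F j, funext fun n => ?_, ?_⟩
  · exact ((lp.evalCLM ℂ _ q n).hasSum (Summable.of_norm hF.summable).hasSum).unique
      (hasSum_sinv p v n)
  · exact (tsum_of_norm_bounded hF fun j => le_rfl).trans_eq (by ring)

end Bounds

lemma memlq_iff_memℓp {q : ℝ} (hq : 0 < q) {v : ℕ → ℂ} :
    memlq q v ↔ Memℓp v (ENNReal.ofReal q) := by
  rw [memℓp_gen_iff (by rwa [ENNReal.toReal_ofReal hq.le]), ENNReal.toReal_ofReal hq.le]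
  rfl

lemma lp.norm_eq_tsum_rpow_ofReal {q : ℝ} (hq : 0 < q)
    (u : lp (fun _ : ℕ => ℂ) (ENNReal.ofReal q)) :
    ‖u‖ = (∑' n, ‖u n‖ ^ q) ^ (1 / q) := by
  rw [lp.norm_eq_tsum_rpow (by rwa [ENNReal.toReal_ofReal hq.le]), ENNReal.toReal_ofReal hq.le]

/-- For `p ∈ (1/2, 1)` and `X = c₀` or `X = ℓ^q` (`q ≥ 1`): every `v ∈ X` has a
preimage `u ∈ X` under `W_p`; moreover the explicit solution with `u_0 = 0` given by
`u_n = (1/p) ∑_{j=0}^{⌊(n-1)/2⌋} ((p-1)/p)^j v_{n-2j-1}` lies in `X`, satisfies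
`W_p u = v`, and `‖u‖ ≤ ‖v‖ / (2p - 1)` in the norm of `X`. -/
theorem stmt12 (p : ℝ) (hp : 1/2 < p) (hp1 : p < 1) :
    (∀ v, memc0 v →
      (∃ u, memc0 u ∧ Wop p u = v) ∧
      memc0 (Sinv p v) ∧ Wop p (Sinv p v) = v ∧
      (⨆ n, ‖Sinv p v n‖) ≤ (⨆ n, ‖v n‖) / (2*p - 1)) ∧
    (∀ q : ℝ, 1 ≤ q → ∀ v, memlq q v →
      (∃ u, memlq q u ∧ Wop p u = v) ∧
      memlq q (Sinv p v) ∧ Wop p (Sinv p v) = v ∧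
      (∑' n, ‖Sinv p v n‖ ^ q) ^ (1/q) ≤ (∑' n, ‖v n‖ ^ q) ^ (1/q) / (2*p - 1)) := by
  have hW := wop_sinv (p := p) (by linarith)
  refine ⟨fun v hv => ?_, fun q hq v hv => ?_⟩
  · have hmem : memc0 (Sinv p v) := tendsto_sinv hp hp1 hv
    have hsup := ciSup_le fun n =>
      norm_sinv_le hp hp1 (fun i => le_ciSup hv.norm.bddAbove_range i) n
    exact ⟨⟨_, hmem, hW v⟩, hmem, hW v, hsup⟩
  · have hq0 : 0 < q := by linarith
    have : Fact (1 ≤ ENNReal.ofReal q) := ⟨ENNReal.one_le_ofReal.2 hq⟩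
    obtain ⟨u, hu, hnorm⟩ := exists_lp_eq_sinv hp hp1 (by rwa [ENNReal.toReal_ofReal hq0.le])
      ⟨v, (memlq_iff_memℓp hq0).1 hv⟩
    have hmem : memlq q (Sinv p v) := hu ▸ (memlq_iff_memℓp hq0).2 u.2
    rw [lp.norm_eq_tsum_rpow_ofReal hq0, lp.norm_eq_tsum_rpow_ofReal hq0, hu] at hnorm
    exact ⟨⟨_, hmem, hW v⟩, hmem, hW v, hnorm⟩
end

section
/- For p = 1/2, the operator W_{1/2} acting on l^1 is not supercyclic: for every y ∈ l^1, the set {λ W_{1/2}^n y : λ ∈ ℂ, n ∈ ℕ} is not dense in l^1. -/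
open Filter

/-- `T` is hypercyclic on the space given by membership predicate `mem` with
distance predicate `dlt`: some `x` in the space has dense orbit. -/
def HypercyclicOn (mem : (ℕ → ℂ) → Prop) (dlt : (ℕ → ℂ) → (ℕ → ℂ) → ℝ → Prop)
    (T : (ℕ → ℂ) → (ℕ → ℂ)) : Prop :=
  ∃ x, mem x ∧ ∀ z, mem z → ∀ ε : ℝ, 0 < ε → ∃ n : ℕ, dlt (T^[n] x) z ε

/-- `T` is supercyclic on the space given by membership predicate `mem` with
distance predicate `dlt`: some `x` in the space has dense projective orbit. -/
def SupercyclicOn (mem : (ℕ → ℂ) → Prop) (dlt : (ℕ → ℂ) → (ℕ → ℂ) → ℝ → Prop)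
    (T : (ℕ → ℂ) → (ℕ → ℂ)) : Prop :=
  ∃ x, mem x ∧ ∀ z, mem z → ∀ ε : ℝ, 0 < ε →
    ∃ (lam : ℂ) (n : ℕ), dlt (fun i => lam * T^[n] x i) z ε

/-- `T` is frequently hypercyclic: some `x` in the space is such that for every ball
(center `z` in the space, radius `ε`), the set of times `n` with `T^[n] x` in the ball
has positive lower density. -/
def FreqHypercyclicOn (mem : (ℕ → ℂ) → Prop) (dlt : (ℕ → ℂ) → (ℕ → ℂ) → ℝ → Prop)
    (T : (ℕ → ℂ) → (ℕ → ℂ)) : Prop :=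
  ∃ x, mem x ∧ ∀ z, mem z → ∀ ε : ℝ, 0 < ε →
    0 < Filter.liminf (fun N : ℕ =>
      (({n : ℕ | dlt (T^[n] x) z ε} ∩ Set.Icc 1 N).ncard : ℝ) / (N : ℝ)) Filter.atTop

/-- `T` is Devaney chaotic: it is hypercyclic, its periodic points are dense, and it has
sensitive dependence on initial conditions. -/
def DevaneyOn (mem : (ℕ → ℂ) → Prop) (dlt : (ℕ → ℂ) → (ℕ → ℂ) → ℝ → Prop)
    (T : (ℕ → ℂ) → (ℕ → ℂ)) : Prop :=
  HypercyclicOn mem dlt T ∧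
  (∀ z, mem z → ∀ ε : ℝ, 0 < ε →
    ∃ y, mem y ∧ (∃ n : ℕ, 1 ≤ n ∧ T^[n] y = y) ∧ dlt y z ε) ∧
  (∃ δ : ℝ, 0 < δ ∧ ∀ x, mem x → ∀ ε : ℝ, 0 < ε →
    ∃ y, mem y ∧ dlt x y ε ∧ ∃ n : ℕ, ¬ dlt (T^[n] x) (T^[n] y) δ)

/-!
The sign sequence `φ = altSign = (1, -1, -1, 1, 1, -1, -1, …)` satisfies `φ_0 + φ_1 = 0` and
`φ_{i-1} + φ_{i+1} = 0` for `i ≥ 1`, i.e. it is annihilated by the adjoint of `W_{1/2}`. Hence the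
range of `W_{1/2}` lies in the kernel of the norm-one functional `x ↦ ∑ φ_i x_i`, so no `λ W^n y`
with `n ≥ 1` comes within `1` of a basis vector `e_j`. A dense projective orbit would therefore
have to approximate both `e_0` and `e_1` by multiples of `y` itself, forcing `|y_1| < |y_0|` and
`|y_0| < |y_1|`.
-/

lemma memlq_one_iff {x : ℕ → ℂ} : memlq 1 x ↔ Summable x := by
  simp only [memlq, Real.rpow_one, summable_norm_iff]

lemma distLqlt_one_iff {x z : ℕ → ℂ} {ε : ℝ} :
    distLqlt 1 x z ε ↔ ∑' i, ‖x i - z i‖ < ε := by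
  simp only [distLqlt, Real.rpow_one]

lemma Wop_succ (p : ℝ) (x : ℕ → ℂ) (i : ℕ) :
    Wop p x (i + 1) = ((1 - p : ℝ) : ℂ) * x i + (p : ℂ) * x (i + 2) := by
  simp [Wop]

lemma summable_Wop (p : ℝ) {x : ℕ → ℂ} (hx : Summable x) : Summable (Wop p x) := by
  rw [← summable_nat_add_iff 1]
  simp only [Wop_succ]
  exact (hx.mul_left _).add (((summable_nat_add_iff 2).2 hx).mul_left _)

lemma summable_iterate_Wop (p : ℝ) {x : ℕ → ℂ} (hx : Summable x) (n : ℕ) :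
    Summable ((Wop p)^[n] x) := by
  induction n with
  | zero => exact hx
  | succ n ih => rw [Function.iterate_succ_apply']; exact summable_Wop p ih

lemma tsum_sub_nat_add {G : Type*} [AddCommGroup G] [TopologicalSpace G]
    [IsTopologicalAddGroup G] [T2Space G] {f : ℕ → G} (hf : Summable f) (k : ℕ) :
    ∑' i, (f i - f (i + k)) = ∑ i ∈ Finset.range k, f i := by
  rw [hf.tsum_sub ((summable_nat_add_iff k).2 hf), ← hf.sum_add_tsum_nat_add k,
    add_sub_cancel_right]

lemma norm_tsum_mul_sub_tsum_mul_le {ι : Type*} {a x z : ι → ℂ} (ha : ∀ i, ‖a i‖ ≤ 1)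
    (hx : Summable x) (hz : Summable z) :
    ‖∑' i, a i * x i - ∑' i, a i * z i‖ ≤ ∑' i, ‖x i - z i‖ := by
  have hbound : ∀ (y : ι → ℂ) i, ‖a i * y i‖ ≤ ‖y i‖ := fun y i => by
    simpa [norm_mul] using mul_le_mul_of_nonneg_right (ha i) (norm_nonneg (y i))
  have hsummable : ∀ {y : ι → ℂ}, Summable y → Summable fun i => ‖a i * y i‖ := fun hy =>
    Summable.of_nonneg_of_le (fun _ => norm_nonneg _) (hbound _) (summable_norm_iff.2 hy)
  rw [← (hsummable hx).of_norm.tsum_sub (hsummable hz).of_norm]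
  simp only [← mul_sub]
  calc ‖∑' i, a i * (x i - z i)‖ ≤ ∑' i, ‖a i * (x i - z i)‖ :=
        norm_tsum_le_tsum_norm (hsummable (hx.sub hz))
    _ ≤ ∑' i, ‖x i - z i‖ :=
        (hsummable (hx.sub hz)).tsum_le_tsum (hbound _) (summable_norm_iff.2 (hx.sub hz))

lemma norm_lt_norm_of_tsum_norm_sub_single_lt {ι : Type*} [DecidableEq ι] {w : ι → ℂ}
    (hw : Summable w) {j k : ι} (hkj : k ≠ j)
    (h : ∑' i, ‖w i - (Pi.single j 1 : ι → ℂ) i‖ < 1 / 2) : ‖w k‖ < ‖w j‖ := by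
  have hpair : ‖w j - 1‖ + ‖w k‖ ≤ ∑' i, ‖w i - (Pi.single j 1 : ι → ℂ) i‖ := by
    have := (summable_norm_iff.2 (hw.sub (hasSum_pi_single j (1 : ℂ)).summable)).sum_le_tsum
      {j, k} (fun _ _ => norm_nonneg _)
    rwa [Finset.sum_pair hkj.symm, Pi.single_eq_same, Pi.single_eq_of_ne hkj, sub_zero] at this
  have hj : 1 ≤ ‖w j‖ + ‖1 - w j‖ := by
    simpa using norm_sub_norm_le (1 : ℂ) (1 - w j)
  linarith [norm_sub_rev (w j) 1]

def altSign (i : ℕ) : ℂ := (-1) ^ ((i + 1) / 2)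

lemma norm_altSign (i : ℕ) : ‖altSign i‖ = 1 := by
  simp [altSign]

lemma altSign_add_two (i : ℕ) : altSign (i + 2) = -altSign i := by
  rw [altSign, altSign, show (i + 2 + 1) / 2 = (i + 1) / 2 + 1 by omega, pow_succ, mul_neg_one]

lemma tsum_altSign_mul_Wop_half {x : ℕ → ℂ} (hx : Summable x) :
    ∑' i, altSign i * Wop (1 / 2) x i = 0 := by
  set g : ℕ → ℂ := fun i => altSign (i + 1) * x i
  have hg : Summable g := (summable_norm_iff.2 hx).of_norm_bounded fun i => by
    rw [norm_mul, norm_altSign, one_mul]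
  have hterm : ∀ i, altSign (i + 1) * Wop (1 / 2) x (i + 1) = (1 / 2) * (g i - g (i + 2)) := by
    intro i
    simp only [g, Wop_succ, show i + 2 + 1 = i + 1 + 2 from rfl, altSign_add_two]
    push_cast
    ring
  have hW : Summable fun i => altSign i * Wop (1 / 2) x i :=
    (summable_norm_iff.2 (summable_Wop _ hx)).of_norm_bounded fun i => by
      rw [norm_mul, norm_altSign, one_mul]
  rw [hW.tsum_eq_zero_add]
  simp only [hterm, tsum_mul_left, tsum_sub_nat_add hg, Finset.sum_range_succ,
    Finset.sum_range_zero, g]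
  norm_num [Wop, altSign]
  ring

lemma eq_zero_of_tsum_norm_smul_iterate_sub_single_lt {y : ℕ → ℂ} (hy : Summable y) {c : ℂ}
    {n j : ℕ} (h : ∑' i, ‖c * (Wop (1 / 2))^[n] y i - (Pi.single j 1 : ℕ → ℂ) i‖ < 1 / 2) :
    n = 0 := by
  obtain _ | m := n
  · rfl
  have hzero : ∑' i, altSign i * (c * (Wop (1 / 2))^[m + 1] y i) = 0 := by
    simp only [Function.iterate_succ_apply', mul_left_comm _ c, tsum_mul_left,
      tsum_altSign_mul_Wop_half (summable_iterate_Wop _ hy m), mul_zero]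
  have hsingle : ∑' i, altSign i * (Pi.single j 1 : ℕ → ℂ) i = altSign j := by
    rw [tsum_eq_single j fun i hi => by rw [Pi.single_eq_of_ne hi, mul_zero], Pi.single_eq_same,
      mul_one]
  have := norm_tsum_mul_sub_tsum_mul_le (fun i => (norm_altSign i).le)
    ((summable_iterate_Wop (1 / 2) hy (m + 1)).mul_left c) (hasSum_pi_single j (1 : ℂ)).summable
  rw [hzero, hsingle, zero_sub, norm_neg, norm_altSign] at this
  linarith

/-- For `p = 1/2`, the operator `W_{1/2}` acting on `l¹` is not supercyclic: no `y ∈ l¹`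
has projective orbit `{λ W_{1/2}^n y : λ ∈ ℂ, n ∈ ℕ}` dense in `l¹`. -/
theorem stmt14 : ¬ SupercyclicOn (memlq 1) (distLqlt 1) (Wop (1/2)) := by
  rintro ⟨y, hy, hdense⟩
  rw [memlq_one_iff] at hy
  have hcoord : ∀ j k, k ≠ j → ‖y k‖ < ‖y j‖ := by
    intro j k hkj
    obtain ⟨c, n, hd⟩ :=
      hdense (Pi.single j 1) (memlq_one_iff.2 (hasSum_pi_single j 1).summable) (1 / 2) one_half_pos
    rw [distLqlt_one_iff] at hd
    obtain rfl := eq_zero_of_tsum_norm_smul_iterate_sub_single_lt hy hd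
    have := norm_lt_norm_of_tsum_norm_sub_single_lt (hy.mul_left c) hkj hd
    simp only [norm_mul] at this
    exact lt_of_mul_lt_mul_left this (norm_nonneg c)
  exact lt_asymm (hcoord 0 1 one_ne_zero) (hcoord 1 0 zero_ne_one)
end

section
/- Let p ∈ (0,1) with p ≠ 1/2, let X be c_0(ℤ) or l^q(ℤ) for some q ≥ 1, and let λ ∈ ℂ with |λ| ≥ 1/|1−2p|. Then λ \overline{W}_p is not hypercyclic on X. In particular, for every x ∈ X and n ≥ 1 one has ‖\overline{W}_p^n x‖ ≥ |1−2p|^n ‖x‖. -/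
/-!
Write `W̄_p = (1 - p) S + p S⁻¹` with `S` the right shift. The shifts are isometries of `c₀(ℤ)`
and of every `ℓ^q(ℤ)`, so the reverse triangle inequality gives
`‖W̄_p x‖ ≥ |(1 - p) - p| ‖x‖`, and hence `‖(λ W̄_p)ⁿ x‖ ≥ (|λ| |1 - 2p|)ⁿ ‖x‖ ≥ ‖x‖`.
So the orbit of a nonzero vector stays away from `0`, while the orbit of `0` is `{0}`.
-/

open Filter

/-- The transition operator of the simple random walk on `ℤ` with jump probability `p`:
`(W̄_p x)_i = (1-p) x_{i-1} + p x_{i+1}` for all `i ∈ ℤ`. -/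
noncomputable def WZop (p : ℝ) (x : ℤ → ℂ) : ℤ → ℂ := fun i =>
  ((1 - p : ℝ) : ℂ) * x (i - 1) + (p : ℂ) * x (i + 1)

/-- Membership in `c₀(ℤ)`: two-sided sequences tending to `0` at infinity. -/
def memc0Z (x : ℤ → ℂ) : Prop := Filter.Tendsto x (Filter.cocompact ℤ) (nhds 0)

/-- Membership in `ℓ^q(ℤ)`: `∑_{i ∈ ℤ} ‖x i‖^q < ∞`. -/
def memlqZ (q : ℝ) (x : ℤ → ℂ) : Prop := Summable (fun i : ℤ => ‖x i‖ ^ q)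

/-- Sup-norm distance between `x` and `z` is (at most) `ε`, coordinatewise strict form. -/
def distC0ltZ (x z : ℤ → ℂ) (ε : ℝ) : Prop := ∀ i, ‖x i - z i‖ < ε

/-- The `q`-th power of the `ℓ^q(ℤ)` distance between `x` and `z` is `< ε`. -/
def distLqltZ (q : ℝ) (x z : ℤ → ℂ) (ε : ℝ) : Prop := (∑' i : ℤ, ‖x i - z i‖ ^ q) < ε

/-- `T` is hypercyclic on the space of two-sided sequences given by membership
predicate `mem` with distance predicate `dlt`. -/
def HypercyclicOnZ (mem : (ℤ → ℂ) → Prop) (dlt : (ℤ → ℂ) → (ℤ → ℂ) → ℝ → Prop)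
    (T : (ℤ → ℂ) → (ℤ → ℂ)) : Prop :=
  ∃ x, mem x ∧ ∀ z, mem z → ∀ ε : ℝ, 0 < ε → ∃ n : ℕ, dlt (T^[n] x) z ε

/-- `T` is supercyclic on the space of two-sided sequences given by membership
predicate `mem` with distance predicate `dlt`. -/
def SupercyclicOnZ (mem : (ℤ → ℂ) → Prop) (dlt : (ℤ → ℂ) → (ℤ → ℂ) → ℝ → Prop)
    (T : (ℤ → ℂ) → (ℤ → ℂ)) : Prop :=
  ∃ x, mem x ∧ ∀ z, mem z → ∀ ε : ℝ, 0 < ε →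
    ∃ (lam : ℂ) (n : ℕ), dlt (fun i => lam * T^[n] x i) z ε

open scoped ENNReal

section Reindex

variable {ι ι' E : Type*} [NormedAddCommGroup E] {r : ℝ≥0∞}

theorem Memℓp.comp_equiv {f : ι → E} (hf : Memℓp f r) (e : ι' ≃ ι) : Memℓp (f ∘ e) r := by
  rcases ENNReal.trichotomy r with rfl | rfl | hr
  · rw [memℓp_zero_iff] at hf ⊢
    exact hf.preimage e.injective.injOn
  · rw [memℓp_infty_iff] at hf ⊢
    rwa [show (fun i => ‖(f ∘ e) i‖) = (fun i => ‖f i‖) ∘ e from rfl, e.surjective.range_comp]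
  · rw [memℓp_gen_iff hr] at hf ⊢
    exact e.summable_iff.mpr hf

def lp.compEquiv (e : ι' ≃ ι) (f : lp (fun _ : ι => E) r) : lp (fun _ : ι' => E) r :=
  ⟨f ∘ e, (lp.memℓp f).comp_equiv e⟩

@[simp]
theorem lp.coe_compEquiv (e : ι' ≃ ι) (f : lp (fun _ : ι => E) r) :
    ⇑(lp.compEquiv e f) = f ∘ e :=
  rfl

theorem lp.norm_compEquiv (e : ι' ≃ ι) (f : lp (fun _ : ι => E) r) :
    ‖lp.compEquiv e f‖ = ‖f‖ := by
  rcases ENNReal.trichotomy r with rfl | rfl | hr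
  · rw [lp.norm_eq_card_dsupport, lp.norm_eq_card_dsupport,
      ← Set.ncard_eq_toFinset_card _ (lp.memℓp _).finite_dsupport,
      ← Set.ncard_eq_toFinset_card _ (lp.memℓp f).finite_dsupport]
    exact congrArg _
      (Set.ncard_preimage_of_injective_subset_range (s := {i | f i ≠ 0}) e.injective (by simp))
  · simp only [lp.norm_eq_ciSup, lp.coe_compEquiv, Function.comp_apply]
    exact e.surjective.iSup_comp fun i => ‖f i‖
  · simp only [lp.norm_eq_tsum_rpow hr, lp.coe_compEquiv, Function.comp_apply]
    rw [e.tsum_eq fun i => ‖f i‖ ^ r.toReal]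

end Reindex

theorem pow_mul_norm_le_norm_iterate {F : Type*} [SeminormedAddGroup F] {A : F → F} {c : ℝ}
    (hc : 0 ≤ c) (hA : ∀ f, c * ‖f‖ ≤ ‖A f‖) (n : ℕ) (f : F) : c ^ n * ‖f‖ ≤ ‖A^[n] f‖ := by
  induction n generalizing f with
  | zero => simp
  | succ n ih =>
    calc c ^ (n + 1) * ‖f‖ = c ^ n * (c * ‖f‖) := by ring
      _ ≤ c ^ n * ‖A f‖ := by gcongr; exact hA f
      _ ≤ ‖A^[n + 1] f‖ := ih (A f)

namespace lp

variable {r : ℝ≥0∞}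

noncomputable def walk (p : ℝ) (f : lp (fun _ : ℤ => ℂ) r) : lp (fun _ : ℤ => ℂ) r :=
  ((1 - p : ℝ) : ℂ) • compEquiv (Equiv.subRight 1) f + (p : ℂ) • compEquiv (Equiv.addRight 1) f

theorem semiconj_walk (p : ℝ) :
    Function.Semiconj (fun f : lp (fun _ : ℤ => ℂ) r => ⇑f) (walk p) (WZop p) :=
  fun _ => rfl

theorem semiconj_smul_walk (p : ℝ) (lam : ℂ) :
    Function.Semiconj (fun f : lp (fun _ : ℤ => ℂ) r => ⇑f) (fun f => lam • walk p f)
      (fun x i => lam * WZop p x i) :=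
  fun _ => rfl

theorem abs_one_sub_two_mul_mul_norm_le_norm_walk [Fact (1 ≤ r)] {p : ℝ} (hp0 : 0 ≤ p)
    (hp1 : p ≤ 1) (f : lp (fun _ : ℤ => ℂ) r) : |1 - 2 * p| * ‖f‖ ≤ ‖walk p f‖ := by
  have hnorm (c : ℝ) (e : ℤ ≃ ℤ) (hc : 0 ≤ c) : ‖(c : ℂ) • compEquiv e f‖ = c * ‖f‖ := by
    rw [norm_smul, Complex.norm_real, Real.norm_of_nonneg hc, norm_compEquiv]
  calc |1 - 2 * p| * ‖f‖ = |(1 - p) * ‖f‖ - p * ‖f‖| := by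
        rw [← sub_mul, abs_mul, abs_norm]; ring_nf
    _ = |‖((1 - p : ℝ) : ℂ) • compEquiv (Equiv.subRight 1) f‖
          - ‖-((p : ℂ) • compEquiv (Equiv.addRight 1) f)‖| := by
        rw [norm_neg, hnorm _ _ (by linarith), hnorm _ _ hp0]
    _ ≤ ‖walk p f‖ := (abs_norm_sub_norm_le _ _).trans_eq (by rw [walk, sub_neg_eq_add])

theorem coe_walk_iterate (p : ℝ) (n : ℕ) (f : lp (fun _ : ℤ => ℂ) r) :
    ⇑((walk p)^[n] f) = (WZop p)^[n] f :=
  (semiconj_walk p).iterate_right n f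

theorem coe_smul_walk_iterate (p : ℝ) (lam : ℂ) (n : ℕ) (f : lp (fun _ : ℤ => ℂ) r) :
    ⇑((fun g => lam • walk p g)^[n] f) = (fun x i => lam * WZop p x i)^[n] f :=
  (semiconj_smul_walk p lam).iterate_right n f

theorem norm_le_norm_smul_walk_iterate [Fact (1 ≤ r)] {p : ℝ} (hp0 : 0 ≤ p) (hp1 : p ≤ 1)
    {lam : ℂ} (hlam : 1 ≤ ‖lam‖ * |1 - 2 * p|) (n : ℕ) (f : lp (fun _ : ℤ => ℂ) r) :
    ‖f‖ ≤ ‖(fun g => lam • walk p g)^[n] f‖ :=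
  calc ‖f‖ ≤ (‖lam‖ * |1 - 2 * p|) ^ n * ‖f‖ :=
        le_mul_of_one_le_left (norm_nonneg f) (one_le_pow₀ hlam)
    _ ≤ _ := pow_mul_norm_le_norm_iterate (by positivity) (fun g => by
        rw [norm_smul, mul_assoc]
        gcongr
        exact abs_one_sub_two_mul_mul_norm_le_norm_walk hp0 hp1 g) n f

end lp

theorem memc0Z.memℓp_top {x : ℤ → ℂ} (hx : memc0Z x) : Memℓp x ∞ := by
  rw [memc0Z, cocompact_eq_cofinite] at hx
  exact memℓp_infty_iff.mpr (by simpa using hx.norm.bddAbove_range_of_cofinite)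

theorem memlqZ_iff_memℓp {q : ℝ} (hq : 0 < q) {x : ℤ → ℂ} :
    memlqZ q x ↔ Memℓp x (ENNReal.ofReal q) := by
  rw [memℓp_gen_iff (by rwa [ENNReal.toReal_ofReal hq.le]), ENNReal.toReal_ofReal hq.le, memlqZ]

theorem memc0Z_single (i : ℤ) (a : ℂ) : memc0Z (Pi.single i a) := by
  rw [memc0Z, cocompact_eq_cofinite]
  refine tendsto_const_nhds.congr' ?_
  filter_upwards [(Set.finite_singleton i).compl_mem_cofinite] with j hj
  exact (Pi.single_eq_of_ne (M := fun _ => ℂ) hj a).symm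

theorem not_hypercyclicOnZ_of_orbits_avoid_zero {mem : (ℤ → ℂ) → Prop}
    {dlt : (ℤ → ℂ) → (ℤ → ℂ) → ℝ → Prop} {T : (ℤ → ℂ) → (ℤ → ℂ)} (hT : T 0 = 0) (h0 : mem 0)
    {z : ℤ → ℂ} (hz : mem z) {δ : ℝ} (hδ : 0 < δ) (hzδ : ¬ dlt 0 z δ)
    (havoid : ∀ x, mem x → x ≠ 0 → ∃ ε > 0, ∀ n, ¬ dlt (T^[n] x) 0 ε) :
    ¬ HypercyclicOnZ mem dlt T := by
  rintro ⟨x, hx, hdense⟩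
  by_cases hx0 : x = 0
  · obtain ⟨n, hn⟩ := hdense z hz δ hδ
    rw [hx0, Function.iterate_fixed hT] at hn
    exact hzδ hn
  · obtain ⟨ε, hε, hfar⟩ := havoid x hx hx0
    obtain ⟨n, hn⟩ := hdense 0 h0 ε hε
    exact hfar n hn

theorem smul_WZop_zero (p : ℝ) (lam : ℂ) : (fun x i => lam * WZop p x i) (0 : ℤ → ℂ) = 0 := by
  ext; simp [WZop]

theorem not_hypercyclicOnZ_memc0Z {p : ℝ} (hp0 : 0 ≤ p) (hp1 : p ≤ 1) {lam : ℂ}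
    (hlam : 1 ≤ ‖lam‖ * |1 - 2 * p|) :
    ¬ HypercyclicOnZ memc0Z distC0ltZ (fun x i => lam * WZop p x i) := by
  refine not_hypercyclicOnZ_of_orbits_avoid_zero (smul_WZop_zero p lam) tendsto_const_nhds
    (memc0Z_single 0 1) one_pos (fun h => by simpa using h 0) fun x hx hx0 => ?_
  set f : lp (fun _ : ℤ => ℂ) ∞ := ⟨x, hx.memℓp_top⟩
  have hf : 0 < ‖f‖ := norm_pos_iff.mpr fun h => hx0 (congrArg (⇑) h)
  refine ⟨‖f‖ / 2, by positivity, fun n hn => ?_⟩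
  have hsmall : ‖(fun g => lam • lp.walk p g)^[n] f‖ ≤ ‖f‖ / 2 :=
    lp.norm_le_of_forall_le (by positivity) fun i => by
      simpa [lp.coe_smul_walk_iterate] using (hn i).le
  linarith [lp.norm_le_norm_smul_walk_iterate hp0 hp1 hlam n f]

theorem not_hypercyclicOnZ_memlqZ {q : ℝ} (hq : 1 ≤ q) {p : ℝ} (hp0 : 0 ≤ p) (hp1 : p ≤ 1)
    {lam : ℂ} (hlam : 1 ≤ ‖lam‖ * |1 - 2 * p|) :
    ¬ HypercyclicOnZ (memlqZ q) (distLqltZ q) (fun x i => lam * WZop p x i) := by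
  have hq0 : 0 < q := by linarith
  have hr : (ENNReal.ofReal q).toReal = q := ENNReal.toReal_ofReal hq0.le
  have : Fact (1 ≤ ENNReal.ofReal q) := ⟨ENNReal.one_le_ofReal.mpr hq⟩
  have hnorm_rpow (f : lp (fun _ : ℤ => ℂ) (ENNReal.ofReal q)) :
      ∑' i, ‖f i‖ ^ q = ‖f‖ ^ q := by
    simpa [hr] using (lp.norm_rpow_eq_tsum (by rwa [hr]) f).symm
  set δ : lp (fun _ : ℤ => ℂ) (ENNReal.ofReal q) := lp.single _ 0 1
  refine not_hypercyclicOnZ_of_orbits_avoid_zero (smul_WZop_zero p lam)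
    ((memlqZ_iff_memℓp hq0).mpr zero_memℓp) ((memlqZ_iff_memℓp hq0).mpr δ.2) one_pos
    (fun h => ?_) fun x hx hx0 => ?_
  · have hδ : ‖δ‖ = 1 := by rw [lp.norm_single (by positivity), norm_one]
    simp only [distLqltZ, Pi.zero_apply, zero_sub, norm_neg] at h
    rw [hnorm_rpow δ, hδ, Real.one_rpow] at h
    exact lt_irrefl _ h
  set f : lp (fun _ : ℤ => ℂ) (ENNReal.ofReal q) := ⟨x, (memlqZ_iff_memℓp hq0).mp hx⟩
  have hf : 0 < ‖f‖ := norm_pos_iff.mpr fun h => hx0 (congrArg (⇑) h)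
  refine ⟨‖f‖ ^ q, by positivity, fun n hn => ?_⟩
  have hg := hnorm_rpow ((fun g => lam • lp.walk p g)^[n] f)
  simp only [distLqltZ, Pi.zero_apply, sub_zero] at hn
  rw [lp.coe_smul_walk_iterate] at hg
  have hmono := Real.rpow_le_rpow (norm_nonneg _)
    (lp.norm_le_norm_smul_walk_iterate hp0 hp1 hlam n f) hq0.le
  linarith

theorem pow_mul_iSup_norm_le_iSup_norm_WZop_iterate {p : ℝ} (hp0 : 0 ≤ p) (hp1 : p ≤ 1)
    {x : ℤ → ℂ} (hx : memc0Z x) (n : ℕ) :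
    |1 - 2 * p| ^ n * (⨆ i, ‖x i‖) ≤ ⨆ i, ‖(WZop p)^[n] x i‖ := by
  have := pow_mul_norm_le_norm_iterate (abs_nonneg _)
    (lp.abs_one_sub_two_mul_mul_norm_le_norm_walk hp0 hp1) n
    (⟨x, hx.memℓp_top⟩ : lp (fun _ : ℤ => ℂ) ∞)
  rwa [lp.norm_eq_ciSup, lp.norm_eq_ciSup, lp.coe_walk_iterate] at this

theorem pow_mul_tsum_rpow_le_tsum_rpow_WZop_iterate {q : ℝ} (hq : 1 ≤ q) {p : ℝ} (hp0 : 0 ≤ p)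
    (hp1 : p ≤ 1) {x : ℤ → ℂ} (hx : memlqZ q x) (n : ℕ) :
    |1 - 2 * p| ^ n * (∑' i : ℤ, ‖x i‖ ^ q) ^ (1 / q) ≤
      (∑' i : ℤ, ‖(WZop p)^[n] x i‖ ^ q) ^ (1 / q) := by
  have hq0 : 0 < q := by linarith
  have hr : (ENNReal.ofReal q).toReal = q := ENNReal.toReal_ofReal hq0.le
  have : Fact (1 ≤ ENNReal.ofReal q) := ⟨ENNReal.one_le_ofReal.mpr hq⟩
  have := pow_mul_norm_le_norm_iterate (abs_nonneg _)
    (lp.abs_one_sub_two_mul_mul_norm_le_norm_walk hp0 hp1) n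
    (⟨x, (memlqZ_iff_memℓp hq0).mp hx⟩ : lp (fun _ : ℤ => ℂ) (ENNReal.ofReal q))
  rwa [lp.norm_eq_tsum_rpow (by rwa [hr]), lp.norm_eq_tsum_rpow (by rwa [hr]),
    lp.coe_walk_iterate, hr] at this

/-- For `p ∈ (0,1)`, `p ≠ 1/2`, and `λ ∈ ℂ` with `|λ| ≥ 1/|1-2p|`, the operator
`λ W̄_p` is not hypercyclic on `c₀(ℤ)` nor on any `ℓ^q(ℤ)`, `q ≥ 1`.  In particular,
for every `x` in the space and `n ≥ 1`, `‖W̄_p^n x‖ ≥ |1-2p|^n ‖x‖`. -/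
theorem stmt15 (p : ℝ) (hp0 : 0 < p) (hp1 : p < 1) (hne : p ≠ 1/2)
    (lam : ℂ) (hlam : 1 / |1 - 2*p| ≤ ‖lam‖) :
    (¬ HypercyclicOnZ memc0Z distC0ltZ (fun x i => lam * WZop p x i)) ∧
    (∀ q : ℝ, 1 ≤ q →
      ¬ HypercyclicOnZ (memlqZ q) (distLqltZ q) (fun x i => lam * WZop p x i)) ∧
    (∀ x : ℤ → ℂ, memc0Z x → ∀ n : ℕ, 1 ≤ n →
      |1 - 2*p| ^ n * (⨆ i, ‖x i‖) ≤ ⨆ i, ‖(WZop p)^[n] x i‖) ∧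
    (∀ q : ℝ, 1 ≤ q → ∀ x : ℤ → ℂ, memlqZ q x → ∀ n : ℕ, 1 ≤ n →
      |1 - 2*p| ^ n * (∑' i : ℤ, ‖x i‖ ^ q) ^ (1/q) ≤
        (∑' i : ℤ, ‖(WZop p)^[n] x i‖ ^ q) ^ (1/q)) := by
  have hD : 0 < |1 - 2 * p| := abs_pos.mpr fun h => hne (by linarith)
  have hlam' : 1 ≤ ‖lam‖ * |1 - 2 * p| := by rwa [div_le_iff₀ hD] at hlam
  exact ⟨not_hypercyclicOnZ_memc0Z hp0.le hp1.le hlam',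
    fun q hq => not_hypercyclicOnZ_memlqZ hq hp0.le hp1.le hlam',
    fun x hx n _ => pow_mul_iSup_norm_le_iSup_norm_WZop_iterate hp0.le hp1.le hx n,
    fun q hq x hx n _ => pow_mul_tsum_rpow_le_tsum_rpow_WZop_iterate hq hp0.le hp1.le hx n⟩
end
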